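/- For all real x ≥ y ≥ 2 and every real r > 0, one has the exact identity S_r(x,y) = ∑_{m ≤ x/y, P⁺(m) ≤ y} r^{ω(m)}·Φ(x/m, y) + U_r(x,y) − U_r(x/y, y), where the first sum runs over integers m ≤ x/y all of whose prime factors are ≤ y. -/
import Mathlib


open Real Finset

/-- `ν(n, y)`: number of distinct prime factors `p ≤ y` of `n`. -/
noncomputable def nu (n : ℕ) (y : ℝ) : ℕ :=
  (n.primeFactors.filter fun p : ℕ => (p : ℝ) ≤ y).card

/-- `n` is `y`-smooth: `P⁺(n) ≤ y` (with `P⁺(1) = 1`). -/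
def YSmooth (n : ℕ) (y : ℝ) : Prop :=
  ∀ p ∈ n.primeFactors, (p : ℝ) ≤ y

noncomputable instance (n : ℕ) (y : ℝ) : Decidable (YSmooth n y) := by
  unfold YSmooth; infer_instance

/-- `S_r(t, y) = ∑_{n ≤ t} r^{ν(n, y)}`. -/
noncomputable def S (r t y : ℝ) : ℝ :=
  ∑ n ∈ Finset.Icc 1 ⌊t⌋₊, r ^ nu n y

/-- `Φ(t, y)`: number of integers `n ≤ t` all of whose prime factors exceed `y`. -/
noncomputable def Phi (t y : ℝ) : ℕ :=
  ((Finset.Icc 1 ⌊t⌋₊).filter fun n => ∀ p ∈ n.primeFactors, y < ((p : ℕ) : ℝ)).card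

/-- `U_r(t, y) = ∑_{n ≤ t, P⁺(n) ≤ y} r^{ω(n)}`. -/
noncomputable def U (r t y : ℝ) : ℝ :=
  ∑ n ∈ (Finset.Icc 1 ⌊t⌋₊).filter fun n => YSmooth n y, r ^ n.primeFactors.card

/-- The `y`-smooth part of `n`. -/
noncomputable def spart (y : ℝ) (n : ℕ) : ℕ :=
  ∏ p ∈ n.primeFactors.filter fun p : ℕ => (p : ℝ) ≤ y, p ^ n.factorization p

/-- The `y`-rough part of `n`. -/
noncomputable def rpart (y : ℝ) (n : ℕ) : ℕ :=
  ∏ p ∈ n.primeFactors.filter fun p : ℕ => ¬ (p : ℝ) ≤ y, p ^ n.factorization p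

lemma prod_factorization_eq {n : ℕ} (hn : n ≠ 0) :
    ∏ p ∈ n.primeFactors, p ^ n.factorization p = n := by
  conv_rhs => rw [← Nat.factorization_prod_pow_eq_self hn]
  rfl

lemma spart_mul_rpart (y : ℝ) {n : ℕ} (hn : n ≠ 0) : spart y n * rpart y n = n := by
  rw [spart, rpart, Finset.prod_filter_mul_prod_filter_not, prod_factorization_eq hn]

lemma spart_pos (y : ℝ) (n : ℕ) : 0 < spart y n :=
  Finset.prod_pos fun p hp =>
    pow_pos (Nat.pos_of_mem_primeFactors (Finset.mem_filter.1 hp).1) _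

lemma rpart_pos (y : ℝ) (n : ℕ) : 0 < rpart y n :=
  Finset.prod_pos fun p hp =>
    pow_pos (Nat.pos_of_mem_primeFactors (Finset.mem_filter.1 hp).1) _

lemma primeFactors_prodpow {n : ℕ} {s : Finset ℕ} (hs : s ⊆ n.primeFactors) :
    (∏ p ∈ s, p ^ n.factorization p).primeFactors = s := by
  ext q
  have hfac : ∀ p ∈ s, p ^ n.factorization p ≠ 0 := fun p hp =>
    pow_ne_zero _ (Nat.pos_of_mem_primeFactors (hs hp)).ne'
  simp only [Nat.mem_primeFactors]
  constructor
  · rintro ⟨hq, hdvd, -⟩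
    obtain ⟨p, hp, hqp⟩ := (hq.prime.dvd_finset_prod_iff _).1 hdvd
    have hpprime := Nat.prime_of_mem_primeFactors (hs hp)
    have hqp' : q ∣ p := hq.dvd_of_dvd_pow hqp
    rwa [(Nat.prime_dvd_prime_iff_eq hq hpprime).1 hqp']
  · intro hq
    have hqprime := Nat.prime_of_mem_primeFactors (hs hq)
    have hexp : n.factorization q ≠ 0 := by
      have := hs hq
      rwa [← Nat.support_factorization, Finsupp.mem_support_iff] at this
    refine ⟨hqprime, dvd_trans (dvd_pow_self q hexp) (Finset.dvd_prod_of_mem _ hq), ?_⟩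
    exact Finset.prod_ne_zero_iff.2 hfac

lemma primeFactors_spart (y : ℝ) (n : ℕ) :
    (spart y n).primeFactors = n.primeFactors.filter fun p : ℕ => (p : ℝ) ≤ y :=
  primeFactors_prodpow (Finset.filter_subset _ _)

lemma primeFactors_rpart (y : ℝ) (n : ℕ) :
    (rpart y n).primeFactors = n.primeFactors.filter fun p : ℕ => ¬ (p : ℝ) ≤ y :=
  primeFactors_prodpow (Finset.filter_subset _ _)

lemma spart_smooth (y : ℝ) (n : ℕ) : YSmooth (spart y n) y := by
  intro p hp
  rw [primeFactors_spart] at hp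
  exact (Finset.mem_filter.1 hp).2

lemma rpart_rough (y : ℝ) (n : ℕ) : ∀ p ∈ (rpart y n).primeFactors, y < (p : ℝ) := by
  intro p hp
  rw [primeFactors_rpart] at hp
  exact lt_of_not_ge (Finset.mem_filter.1 hp).2

lemma spart_eq_of_smooth {y : ℝ} {n : ℕ} (hn : n ≠ 0) (h : YSmooth n y) :
    spart y n = n := by
  rw [spart, Finset.filter_true_of_mem h, prod_factorization_eq hn]

lemma spart_mul_eq {y : ℝ} {m q : ℕ} (hm : m ≠ 0) (hq : q ≠ 0)
    (hsm : YSmooth m y) (hrq : ∀ p ∈ q.primeFactors, y < (p : ℝ)) :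
    spart y (m * q) = m := by
  have hfilter : (m * q).primeFactors.filter (fun p : ℕ => (p : ℝ) ≤ y) = m.primeFactors := by
    rw [Nat.primeFactors_mul hm hq, Finset.filter_union, Finset.filter_true_of_mem hsm,
      Finset.filter_false_of_mem (fun p hp => not_le.2 (hrq p hp)), Finset.union_empty]
  rw [spart, hfilter]
  have hcong : ∀ p ∈ m.primeFactors, p ^ (m * q).factorization p = p ^ m.factorization p := by
    intro p hp
    have hq0 : q.factorization p = 0 := by
      rw [← Finsupp.notMem_support_iff, Nat.support_factorization]
      intro hpq
      exact absurd (hrq p hpq) (not_lt.2 (hsm p hp))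
    rw [Nat.factorization_mul hm hq]
    simp [hq0]
  rw [Finset.prod_congr rfl hcong, prod_factorization_eq hm]

lemma rpart_mul_eq {y : ℝ} {m q : ℕ} (hm : m ≠ 0) (hq : q ≠ 0)
    (hsm : YSmooth m y) (hrq : ∀ p ∈ q.primeFactors, y < (p : ℝ)) :
    rpart y (m * q) = q := by
  have h := spart_mul_rpart y (mul_ne_zero hm hq)
  rw [spart_mul_eq hm hq hsm hrq] at h
  exact Nat.eq_of_mul_eq_mul_left (Nat.pos_of_ne_zero hm) h

theorem S_decomposition (x y r : ℝ) (hy : 2 ≤ y) (hxy : y ≤ x) (hr : 0 < r) :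
    S r x y =
      (∑ m ∈ (Finset.Icc 1 ⌊x / y⌋₊).filter fun m => YSmooth m y,
        r ^ m.primeFactors.card * (Phi (x / m) y : ℝ)) +
      U r x y - U r (x / y) y := by
  have hy0 : (0:ℝ) < y := by linarith
  have hx0 : (0:ℝ) < x := by linarith
  set N := ⌊x / y⌋₊ with hN
  set X := ⌊x⌋₊ with hX
  have hNX : N ≤ X := Nat.floor_mono (div_le_self hx0.le (by linarith))
  have hXx : (X : ℝ) ≤ x := Nat.floor_le hx0.le
  -- the "large smooth part" set
  set D : Finset ℕ := (Finset.Icc 1 X).filter (fun n => YSmooth n y ∧ ¬ n ≤ N) with hD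
  -- Step A : U r x y - U r (x/y) y = ∑ over D
  have hUsplit : U r x y - U r (x / y) y = ∑ n ∈ D, r ^ n.primeFactors.card := by
    have hunion : ((Finset.Icc 1 N).filter fun n => YSmooth n y) ∪ D
        = (Finset.Icc 1 X).filter fun n => YSmooth n y := by
      ext n
      simp only [hD, Finset.mem_union, Finset.mem_filter, Finset.mem_Icc]
      constructor
      · rintro (⟨⟨h1, h2⟩, h3⟩ | ⟨⟨h1, h2⟩, h3, _⟩)
        · exact ⟨⟨h1, h2.trans hNX⟩, h3⟩
        · exact ⟨⟨h1, h2⟩, h3⟩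
      · rintro ⟨⟨h1, h2⟩, h3⟩
        by_cases h : n ≤ N
        · exact Or.inl ⟨⟨h1, h⟩, h3⟩
        · exact Or.inr ⟨⟨h1, h2⟩, h3, h⟩
    have hdisj : Disjoint ((Finset.Icc 1 N).filter fun n => YSmooth n y) D := by
      rw [Finset.disjoint_left]
      intro n hn hn'
      simp only [hD, Finset.mem_filter, Finset.mem_Icc] at hn hn'
      exact hn'.2.2 hn.1.2
    rw [U, U, ← hX, ← hN, ← hunion, Finset.sum_union hdisj]
    ring
  -- Step B : split S according to whether spart ≤ N
  rw [S, ← hX,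
    ← Finset.sum_filter_add_sum_filter_not (Finset.Icc 1 X) (fun n => spart y n ≤ N)
      (fun n => r ^ nu n y)]
  -- Step C : second piece equals ∑ over D of r^ω
  have hset : (Finset.Icc 1 X).filter (fun n => ¬ spart y n ≤ N) = D := by
    ext n
    simp only [hD, Finset.mem_filter, Finset.mem_Icc]
    constructor
    · rintro ⟨⟨h1, h2⟩, h3⟩
      have hn0 : n ≠ 0 := by omega
      have hs0 : (0:ℝ) < (spart y n : ℝ) := by exact_mod_cast spart_pos y n
      have hsgt : x / y < (spart y n : ℝ) := by
        have h4 : x / y < (N : ℝ) + 1 := Nat.lt_floor_add_one _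
        have h5 : (N : ℝ) + 1 ≤ (spart y n : ℝ) := by exact_mod_cast Nat.lt_of_not_le h3
        linarith
      have hmul : (spart y n : ℝ) * (rpart y n : ℝ) ≤ x := by
        have : ((spart y n * rpart y n : ℕ) : ℝ) ≤ x := by
          rw [spart_mul_rpart y hn0]
          exact le_trans (by exact_mod_cast h2) hXx
        push_cast at this; linarith
      have hrlt : (rpart y n : ℝ) < y := by
        have hx' : x < (spart y n : ℝ) * y := by
          rw [div_lt_iff₀ hy0] at hsgt; linarith
        nlinarith
      have hrp1 : rpart y n = 1 := by
        by_contra h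
        have hr0 : rpart y n ≠ 0 := (rpart_pos y n).ne'
        have hpmem : (rpart y n).minFac ∈ (rpart y n).primeFactors :=
          Nat.mem_primeFactors.2 ⟨Nat.minFac_prime h, Nat.minFac_dvd _, hr0⟩
        have h6 : y < ((rpart y n).minFac : ℝ) := rpart_rough y n _ hpmem
        have h7 : ((rpart y n).minFac : ℝ) ≤ (rpart y n : ℝ) := by
          exact_mod_cast Nat.minFac_le (rpart_pos y n)
        linarith
      have hns : n = spart y n := by
        conv_lhs => rw [← spart_mul_rpart y hn0]
        rw [hrp1, mul_one]
      refine ⟨⟨h1, h2⟩, ?_, ?_⟩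
      · rw [hns]; exact spart_smooth y n
      · rw [hns]; exact h3
    · rintro ⟨⟨h1, h2⟩, h3, h4⟩
      exact ⟨⟨h1, h2⟩, by rwa [spart_eq_of_smooth (by omega) h3]⟩
  have hsecond : ∑ n ∈ (Finset.Icc 1 X).filter (fun n => ¬ spart y n ≤ N), r ^ nu n y
      = ∑ n ∈ D, r ^ n.primeFactors.card := by
    rw [hset]
    refine Finset.sum_congr rfl fun n hn => ?_
    simp only [hD, Finset.mem_filter] at hn
    rw [nu, Finset.filter_true_of_mem hn.2.1]
  -- Step D : first piece equals the double sum
  set Q : ℕ → Finset ℕ := fun m =>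
    (Finset.Icc 1 ⌊x / (m : ℝ)⌋₊).filter fun n => ∀ p ∈ n.primeFactors, y < ((p : ℕ) : ℝ)
    with hQ
  have hfirst : ∑ n ∈ (Finset.Icc 1 X).filter (fun n => spart y n ≤ N), r ^ nu n y
      = ∑ m ∈ (Finset.Icc 1 N).filter (fun m => YSmooth m y),
          r ^ m.primeFactors.card * (Phi (x / m) y : ℝ) := by
    have hPhi : ∀ m : ℕ, (Phi (x / (m : ℝ)) y : ℝ) = ((Q m).card : ℝ) := fun m => rfl
    have hstep : ∀ m ∈ (Finset.Icc 1 N).filter (fun m => YSmooth m y),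
        r ^ m.primeFactors.card * (Phi (x / m) y : ℝ)
          = ∑ q ∈ Q m, r ^ m.primeFactors.card := by
      intro m _
      rw [Finset.sum_const, nsmul_eq_mul, hPhi]
      ring
    rw [Finset.sum_congr rfl hstep]
    have hsig : ∑ p ∈ ((Finset.Icc 1 N).filter (fun m => YSmooth m y)).sigma Q,
        r ^ p.1.primeFactors.card
        = ∑ m ∈ (Finset.Icc 1 N).filter (fun m => YSmooth m y), ∑ q ∈ Q m,
            r ^ m.primeFactors.card :=
      Finset.sum_sigma _ _ _
    rw [← hsig]
    refine Finset.sum_nbij' (fun n => ⟨spart y n, rpart y n⟩)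
      (fun p => p.1 * p.2) ?_ ?_ ?_ ?_ ?_
    · intro n hn
      simp only [Finset.mem_filter, Finset.mem_Icc] at hn
      obtain ⟨⟨h1, h2⟩, h3⟩ := hn
      have hn0 : n ≠ 0 := by omega
      have hs0 : 0 < spart y n := spart_pos y n
      simp only [Finset.mem_sigma, Finset.mem_filter, Finset.mem_Icc, hQ]
      refine ⟨⟨⟨hs0, h3⟩, spart_smooth y n⟩, ⟨⟨rpart_pos y n, ?_⟩, rpart_rough y n⟩⟩
      rw [Nat.le_floor_iff (by positivity)]
      rw [le_div_iff₀ (by exact_mod_cast hs0)]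
      have : ((spart y n * rpart y n : ℕ) : ℝ) ≤ x := by
        rw [spart_mul_rpart y hn0]
        exact le_trans (by exact_mod_cast h2) hXx
      push_cast at this; linarith
    · rintro ⟨m, q⟩ hmq
      simp only [Finset.mem_sigma, Finset.mem_filter, Finset.mem_Icc, hQ] at hmq
      obtain ⟨⟨⟨hm1, hm2⟩, hms⟩, ⟨hq1, hq2⟩, hqr⟩ := hmq
      have hm0 : (0:ℝ) < (m:ℝ) := by exact_mod_cast hm1
      have hq' : (q : ℝ) ≤ x / m :=
        le_trans ((Nat.le_floor_iff (by positivity)).1 hq2) le_rfl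
      simp only [Finset.mem_filter, Finset.mem_Icc]
      refine ⟨⟨Nat.one_le_iff_ne_zero.2 (mul_ne_zero (by omega) (by omega)), ?_⟩, ?_⟩
      · rw [hX, Nat.le_floor_iff hx0.le]
        push_cast
        rw [le_div_iff₀ hm0] at hq'
        linarith
      · rw [spart_mul_eq (by omega) (by omega) hms hqr]
        exact hm2
    · intro n hn
      simp only [Finset.mem_filter, Finset.mem_Icc] at hn
      exact spart_mul_rpart y (by omega)
    · rintro ⟨m, q⟩ hmq
      simp only [Finset.mem_sigma, Finset.mem_filter, Finset.mem_Icc, hQ] at hmq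
      obtain ⟨⟨⟨hm1, hm2⟩, hms⟩, ⟨hq1, hq2⟩, hqr⟩ := hmq
      have e1 := spart_mul_eq (y := y) (by omega : m ≠ 0) (by omega : q ≠ 0) hms hqr
      have e2 := rpart_mul_eq (y := y) (by omega : m ≠ 0) (by omega : q ≠ 0) hms hqr
      simp [e1, e2]
    · intro n hn
      simp only [Finset.mem_filter, Finset.mem_Icc] at hn
      have : nu n y = (spart y n).primeFactors.card := by
        rw [nu, primeFactors_spart]
      rw [this]
  rw [hfirst, hsecond]
  linarith [hUsplit]
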